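/- An IB-homogeneous graph that has a bimorphism mapping a nonedge to an edge embeds arbitrarily large finite cliques and arbitrarily large finite independent sets. -/

import Mathlib

/-- A bimorphism of a graph: a bijective edge-preserving self-map. -/
def IsBimorphism {V : Type*} (G : SimpleGraph V) (F : V → V) : Prop :=
  Function.Bijective F ∧ ∀ u v, G.Adj u v → G.Adj (F u) (F v)

/-- A partial isomorphism of `G` with finite domain `S`. -/
def IsPartialIso {V : Type*} (G : SimpleGraph V) (S : Finset V) (f : V → V) : Prop :=
  Set.InjOn f S ∧ ∀ u ∈ S, ∀ v ∈ S, (G.Adj u v ↔ G.Adj (f u) (f v))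

/-- `G` is IB-homogeneous: every isomorphism between finite induced subgraphs
extends to a bimorphism of `G`. -/
def IBHom {V : Type*} (G : SimpleGraph V) : Prop :=
  ∀ (S : Finset V) (f : V → V), IsPartialIso G S f →
    ∃ F : V → V, IsBimorphism G F ∧ ∀ x ∈ S, F x = f x

/-- `G` represents the monomorphism `m`: some bimorphism maps a nonedge to an edge. -/
def RepM {V : Type*} (G : SimpleGraph V) : Prop :=
  ∃ F : V → V, IsBimorphism G F ∧
    ∃ u v : V, u ≠ v ∧ ¬ G.Adj u v ∧ G.Adj (F u) (F v)

/-- An independent set: pairwise nonadjacent vertices. -/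
def IsIndep {V : Type*} (G : SimpleGraph V) (s : Set V) : Prop :=
  s.Pairwise fun u v => ¬ G.Adj u v

/-!
If an injective endomorphism `f` of a graph sends a nonadjacent pair of a finite set `s` to an
edge, then `f '' s` has as many vertices as `s` and fewer nonadjacent pairs, since the nonadjacent
pairs of `f '' s` all come from those of `s`. Iterating, any `n` vertices are carried onto an
`n`-clique.

IB-homogeneity moves the nonedge that a bimorphism `F` sends to an edge onto any given nonedge,
which yields such endomorphisms of `G`. For independent sets we need them for `Gᶜ`: a bimorphism
`K` moves the edge between the images under `F` onto any given edge, and the inverse of the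
bijection `K ∘ F` is an endomorphism of `Gᶜ` sending that edge to a nonedge.
-/

namespace SimpleGraph

variable {V : Type*} [DecidableEq V] (H : SimpleGraph V) [DecidableRel H.Adj]

def nonAdjPairs (s : Finset V) : Finset (V × V) :=
  s.offDiag.filter fun p => ¬ H.Adj p.1 p.2

variable {H}

theorem card_nonAdjPairs_map_lt {s : Finset V} {f : H →g H} (hf : Function.Injective f)
    {a b : V} (ha : a ∈ s) (hb : b ∈ s) (hab : a ≠ b) (hnadj : ¬ H.Adj a b)
    (hfab : H.Adj (f a) (f b)) :
    (H.nonAdjPairs (s.map ⟨f, hf⟩)).card < (H.nonAdjPairs s).card := by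
  have hsub : H.nonAdjPairs (s.map ⟨f, hf⟩) ⊆ (H.nonAdjPairs s).image (Prod.map f f) := by
    rintro ⟨fx, fy⟩ hp
    simp only [nonAdjPairs, Finset.mem_filter, Finset.mem_offDiag, Finset.mem_map,
      Function.Embedding.coeFn_mk] at hp
    obtain ⟨⟨⟨x, hx, rfl⟩, ⟨y, hy, rfl⟩, hxy⟩, hn⟩ := hp
    refine Finset.mem_image.mpr ⟨(x, y), ?_, rfl⟩
    simp only [nonAdjPairs, Finset.mem_filter, Finset.mem_offDiag]
    exact ⟨⟨hx, hy, fun h => hxy (congrArg f h)⟩, fun h => hn (f.map_adj h)⟩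
  have hnew : (f a, f b) ∉ H.nonAdjPairs (s.map ⟨f, hf⟩) := by
    simp [nonAdjPairs, hfab]
  have hold : (f a, f b) ∈ (H.nonAdjPairs s).image (Prod.map f f) :=
    Finset.mem_image.mpr ⟨(a, b), by simp [nonAdjPairs, ha, hb, hab, hnadj], rfl⟩
  calc (H.nonAdjPairs (s.map ⟨f, hf⟩)).card
      < ((H.nonAdjPairs s).image (Prod.map f f)).card :=
        Finset.card_lt_card ((Finset.ssubset_iff_of_subset hsub).mpr ⟨_, hold, hnew⟩)
    _ ≤ (H.nonAdjPairs s).card := Finset.card_image_le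

theorem exists_isClique_card_eq
    (h : ∀ a b, a ≠ b → ¬ H.Adj a b →
      ∃ f : H →g H, Function.Injective f ∧ H.Adj (f a) (f b))
    (s : Finset V) : ∃ t : Finset V, t.card = s.card ∧ H.IsClique (t : Set V) := by
  by_cases hs : H.IsClique (s : Set V)
  · exact ⟨s, rfl, hs⟩
  obtain ⟨a, ha, b, hb, hab, hnadj⟩ : ∃ a ∈ s, ∃ b ∈ s, a ≠ b ∧ ¬ H.Adj a b := by
    simpa [IsClique, Set.Pairwise] using hs
  obtain ⟨f, hf, hfab⟩ := h a b hab hnadj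
  have := card_nonAdjPairs_map_lt hf ha hb hab hnadj hfab
  obtain ⟨t, ht, htc⟩ := exists_isClique_card_eq h (s.map ⟨f, hf⟩)
  exact ⟨t, by rw [ht, Finset.card_map], htc⟩
termination_by (H.nonAdjPairs s).card

end SimpleGraph

section Bimorphism

variable {V : Type*} {G : SimpleGraph V} {F K : V → V}

theorem IsBimorphism.comp (hF : IsBimorphism G F) (hK : IsBimorphism G K) :
    IsBimorphism G (F ∘ K) :=
  ⟨hF.1.comp hK.1, fun _ _ h => hF.2 _ _ (hK.2 _ _ h)⟩

def IsBimorphism.toHom (hF : IsBimorphism G F) : G →g G :=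
  ⟨F, fun h => hF.2 _ _ h⟩

noncomputable def IsBimorphism.invCompl (hF : IsBimorphism G F) : Gᶜ →g Gᶜ where
  toFun := Function.surjInv hF.1.2
  map_rel' {x y} h := by
    rw [SimpleGraph.compl_adj] at h ⊢
    refine ⟨fun heq => h.1 ((Function.injective_surjInv hF.1.2).eq_iff.mp heq),
      fun hadj => h.2 ?_⟩
    simpa only [Function.surjInv_eq hF.1.2] using hF.2 _ _ hadj

theorem IsBimorphism.invCompl_apply (hF : IsBimorphism G F) (x : V) :
    hF.invCompl (F x) = x :=
  Function.leftInverse_surjInv hF.1 x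

theorem IBHom.exists_isBimorphism_apply_eq (hG : IBHom G) {a b u v : V} (hab : a ≠ b)
    (huv : u ≠ v) (hadj : G.Adj a b ↔ G.Adj u v) :
    ∃ K, IsBimorphism G K ∧ K a = u ∧ K b = v := by
  classical
  let f : V → V := fun x => if x = a then u else v
  have hfa : f a = u := if_pos rfl
  have hfb : f b = v := if_neg hab.symm
  have hf : IsPartialIso G {a, b} f := by
    constructor
    · intro x hx y hy
      simp only [Finset.coe_insert, Finset.coe_singleton, Set.mem_insert_iff,
        Set.mem_singleton_iff] at hx hy
      rcases hx with hx | hx <;> rcases hy with hy | hy <;> rw [hx, hy] <;>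
        simp [hfa, hfb, huv, huv.symm, hab, hab.symm]
    · intro x hx y hy
      simp only [Finset.mem_insert, Finset.mem_singleton] at hx hy
      rcases hx with hx | hx <;> rcases hy with hy | hy <;> rw [hx, hy] <;>
        simp only [hfa, hfb, SimpleGraph.irrefl, hadj, G.adj_comm b a, G.adj_comm v u]
  obtain ⟨K, hK, hKf⟩ := hG {a, b} f hf
  exact ⟨K, hK, (hKf a (by simp)).trans hfa, (hKf b (by simp)).trans hfb⟩

theorem IBHom.exists_injective_hom_adj (hG : IBHom G) (hm : RepM G) {a b : V} (hab : a ≠ b)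
    (hnadj : ¬ G.Adj a b) : ∃ f : G →g G, Function.Injective f ∧ G.Adj (f a) (f b) := by
  obtain ⟨F, hF, u, v, huv, hnuv, hFuv⟩ := hm
  obtain ⟨K, hK, rfl, rfl⟩ := hG.exists_isBimorphism_apply_eq hab huv (iff_of_false hnadj hnuv)
  exact ⟨(hF.comp hK).toHom, (hF.comp hK).1.1, hFuv⟩

theorem IBHom.exists_injective_compl_hom_adj (hG : IBHom G) (hm : RepM G) {a b : V}
    (hadj : G.Adj a b) : ∃ f : Gᶜ →g Gᶜ, Function.Injective f ∧ Gᶜ.Adj (f a) (f b) := by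
  obtain ⟨F, hF, u, v, huv, hnuv, hFuv⟩ := hm
  obtain ⟨K, hK, hKu, hKv⟩ :=
    hG.exists_isBimorphism_apply_eq hFuv.ne hadj.ne (iff_of_true hFuv hadj)
  have hKF := hK.comp hF
  refine ⟨hKF.invCompl, Function.injective_surjInv hKF.1.2, ?_⟩
  have hu := hKF.invCompl_apply u
  have hv := hKF.invCompl_apply v
  rw [Function.comp_apply, hKu] at hu
  rw [Function.comp_apply, hKv] at hv
  rw [hu, hv]
  exact ⟨huv, hnuv⟩

end Bimorphism

theorem stmt8_general {V : Type*} [Infinite V] (G : SimpleGraph V)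
    (hG : IBHom G) (hm : RepM G) :
    ∀ n : ℕ, (∃ s : Finset V, s.card = n ∧ G.IsClique ↑s) ∧
      (∃ s : Finset V, s.card = n ∧ IsIndep G ↑s) := by
  classical
  intro n
  obtain ⟨s, hs⟩ := Infinite.exists_subset_card_eq V n
  obtain ⟨t, ht, hclique⟩ := SimpleGraph.exists_isClique_card_eq
    (fun _ _ hab hnadj => hG.exists_injective_hom_adj hm hab hnadj) s
  obtain ⟨t', ht', hindep⟩ := SimpleGraph.exists_isClique_card_eq (H := Gᶜ)
    (fun _ _ hab hnadj => hG.exists_injective_compl_hom_adj hm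
      (by simpa [SimpleGraph.compl_adj, hab] using hnadj)) s
  exact ⟨⟨t, ht.trans hs, hclique⟩,
    ⟨t', ht'.trans hs, fun _ hx _ hy hxy => (hindep hx hy hxy).2⟩⟩

/-- A countably infinite IB-homogeneous graph representing `m` embeds arbitrarily large
cliques and independent sets. -/
theorem stmt8 {V : Type*} [Countable V] [Infinite V] (G : SimpleGraph V)
    (hG : IBHom G) (hm : RepM G) :
    ∀ n : ℕ, (∃ s : Finset V, s.card = n ∧ G.IsClique ↑s) ∧
      (∃ s : Finset V, s.card = n ∧ IsIndep G ↑s) :=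
  stmt8_general G hG hm
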